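/- For two circles of equal radius r > 0 whose centers are at distance d with 0 ≤ d < 2r, setting θ = 2·arccos(d/(2r)), the area of their intersection equals r²(θ − sin θ). -/

import Mathlib

/-!
An isometry of the plane (a reflection followed by translations) preserves area, so we may place
the centres at `(∓a, 0)` with `a = d / 2`. The lens is then `{(x, y) | y² ≤ r² - (|x| + a)²}`, and
Cavalieri's principle gives its area as `4 ∫_a^r √(r² - u²) du`. The substitution `u = r cos t`
turns this into `4 r² ∫_0^φ sin² t dt = r² (2φ - sin 2φ)` with `φ = arccos (a / r) = θ / 2`.
-/

open MeasureTheory Real Metric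

section Congruence

variable {E : Type*} [NormedAddCommGroup E] [InnerProductSpace ℝ E] [FiniteDimensional ℝ E]
  [MeasurableSpace E] [BorelSpace E]

theorem volume_closedBall_inter_closedBall_congr {c₁ c₂ x₁ x₂ : E}
    (h : dist c₁ c₂ = dist x₁ x₂) (r₁ r₂ : ℝ) :
    volume (closedBall c₁ r₁ ∩ closedBall c₂ r₂) = volume (closedBall x₁ r₁ ∩ closedBall x₂ r₂) := by
  set ρ := Submodule.reflection (ℝ ∙ ((c₂ - c₁) - (x₂ - x₁)))ᗮ
  have hρ : ρ (c₂ - c₁) = x₂ - x₁ :=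
    Submodule.reflection_sub (by rw [← dist_eq_norm, ← dist_eq_norm, dist_comm, h, dist_comm])
  let g : E → E := fun x => ρ (x - c₁) + x₁
  have hg : MeasurePreserving g :=
    (measurePreserving_add_right volume x₁).comp
      (ρ.measurePreserving.comp (measurePreserving_sub_right volume c₁))
  have hpre :
      g ⁻¹' (closedBall x₁ r₁ ∩ closedBall x₂ r₂) = closedBall c₁ r₁ ∩ closedBall c₂ r₂ := by
    ext x
    have h₂ : g x - x₂ = ρ (x - c₂) := by
      rw [show x - c₂ = (x - c₁) - (c₂ - c₁) by abel, map_sub, hρ]; simp only [g]; abel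
    simp only [Set.mem_preimage, Set.mem_inter_iff, mem_closedBall, dist_eq_norm, h₂,
      LinearIsometryEquiv.norm_map, g, add_sub_cancel_right]
  rw [← hpre, hg.measure_preimage
    (measurableSet_closedBall.inter measurableSet_closedBall).nullMeasurableSet]

end Congruence

theorem volume_setOf_sq_le (c : ℝ) : volume {y : ℝ | y ^ 2 ≤ c} = ENNReal.ofReal (2 * √c) := by
  rcases le_or_gt 0 c with hc | hc
  · have : {y : ℝ | y ^ 2 ≤ c} = Set.Icc (-√c) √c := by
      ext y; exact Real.sq_le hc
    rw [this, Real.volume_Icc, sub_neg_eq_add, two_mul]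
  · have : {y : ℝ | y ^ 2 ≤ c} = ∅ :=
      Set.eq_empty_of_forall_notMem fun y hy => (sq_nonneg y).not_gt (hc.trans_le' hy)
    rw [this, Real.sqrt_eq_zero_of_nonpos hc.le]
    simp

theorem volume_setOf_snd_sq_le {g : ℝ → ℝ} (hg : Measurable g) :
    volume {p : ℝ × ℝ | p.2 ^ 2 ≤ g p.1} = ∫⁻ x, ENNReal.ofReal (2 * √(g x)) := by
  rw [Measure.volume_eq_prod, Measure.prod_apply (measurableSet_le (by fun_prop) (by fun_prop))]
  exact lintegral_congr fun x => volume_setOf_sq_le (g x)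

theorem measurePreserving_euclideanSpace_fin_two :
    MeasurePreserving (fun x : EuclideanSpace ℝ (Fin 2) => (x 0, x 1)) :=
  (volume_preserving_finTwoArrow ℝ).comp (PiLp.volume_preserving_ofLp (Fin 2))

theorem mem_closedBall_fin_two {x : EuclideanSpace ℝ (Fin 2)} {c₀ c₁ r : ℝ} (hr : 0 ≤ r) :
    x ∈ closedBall !₂[c₀, c₁] r ↔ (x 0 - c₀) ^ 2 + (x 1 - c₁) ^ 2 ≤ r ^ 2 := by
  rw [mem_closedBall, EuclideanSpace.dist_eq, Fin.sum_univ_two, Real.sqrt_le_left hr]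
  simp [Real.dist_eq, sq_abs]

theorem add_sq_add_sq_le_and_sub_sq_add_sq_le_iff {x y a c : ℝ} (ha : 0 ≤ a) :
    (x + a) ^ 2 + y ^ 2 ≤ c ∧ (x - a) ^ 2 + y ^ 2 ≤ c ↔ y ^ 2 ≤ c - (|x| + a) ^ 2 := by
  rcases abs_cases x with ⟨hx, hx0⟩ | ⟨hx, hx0⟩ <;> rw [hx]
  · exact ⟨fun h => by linarith [h.1], fun h => ⟨by linarith, by nlinarith⟩⟩
  · exact ⟨fun h => by nlinarith [h.2], fun h => ⟨by nlinarith, by nlinarith⟩⟩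

theorem integral_sqrt_sq_sub_sq_of_cos {r φ : ℝ} (hr : 0 ≤ r) (hφ₀ : 0 ≤ φ) (hφπ : φ ≤ π) :
    ∫ u in r * cos φ..r, √(r ^ 2 - u ^ 2) = r ^ 2 * (φ - sin φ * cos φ) / 2 := by
  have hsubst := intervalIntegral.integral_comp_mul_deriv (a := φ) (b := 0)
    (f := fun t => r * cos t) (f' := fun t => -(r * sin t)) (g := fun u => √(r ^ 2 - u ^ 2))
    (fun t _ => (hasDerivAt_cos t).const_mul r |>.congr_deriv (by ring))
    (by fun_prop) (by fun_prop)
  simp only [Function.comp_def, cos_zero, mul_one] at hsubst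
  rw [← hsubst, intervalIntegral.integral_symm]
  have hsin : ∀ t ∈ Set.uIcc 0 φ,
      √(r ^ 2 - (r * cos t) ^ 2) * -(r * sin t) = -(r ^ 2 * sin t ^ 2) := by
    intro t ht
    rw [Set.uIcc_of_le hφ₀] at ht
    have : r ^ 2 - (r * cos t) ^ 2 = (r * sin t) ^ 2 := by
      linear_combination (-r ^ 2) * sin_sq_add_cos_sq t
    rw [this, Real.sqrt_sq (mul_nonneg hr (sin_nonneg_of_nonneg_of_le_pi ht.1 (ht.2.trans hφπ)))]
    ring
  rw [intervalIntegral.integral_congr hsin, intervalIntegral.integral_neg, neg_neg,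
    intervalIntegral.integral_const_mul, integral_sin_sq]
  simp only [sin_zero, cos_zero, mul_one, zero_sub, sub_zero]
  ring

theorem integrable_sqrt_sq_sub_sq_abs_add (r a : ℝ) :
    Integrable fun x : ℝ => √(r ^ 2 - (|x| + a) ^ 2) := by
  refine (by fun_prop : Continuous _).integrable_of_hasCompactSupport
    (HasCompactSupport.intro (isCompact_closedBall 0 (|r| + |a|)) fun x hx => ?_)
  rw [mem_closedBall, dist_zero_right, Real.norm_eq_abs, not_le] at hx
  have : |r| < |x| + a := by linarith [neg_abs_le a]
  exact Real.sqrt_eq_zero_of_nonpos (by nlinarith [sq_abs r, abs_nonneg r])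

theorem integral_sqrt_sq_sub_sq_abs_add {r a : ℝ} (ha : 0 ≤ a) (har : a ≤ r) :
    ∫ x, √(r ^ 2 - (|x| + a) ^ 2) = 2 * ∫ u in a..r, √(r ^ 2 - u ^ 2) := by
  rw [integral_comp_abs (f := fun t => √(r ^ 2 - (t + a) ^ 2))]
  congr 1
  have hvanish : ∀ t ∈ Set.Ioi (0 : ℝ) \ Set.Ioc 0 (r - a), √(r ^ 2 - (t + a) ^ 2) = 0 := by
    rintro t ⟨ht, htr⟩
    simp only [Set.mem_Ioi, Set.mem_Ioc, not_and, not_le] at ht htr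
    exact Real.sqrt_eq_zero_of_nonpos (by nlinarith [htr ht])
  rw [setIntegral_eq_of_subset_of_forall_sdiff_eq_zero measurableSet_Ioi
      Set.Ioc_subset_Ioi_self hvanish,
    ← intervalIntegral.integral_of_le (by linarith),
    intervalIntegral.integral_comp_add_right (fun u => √(r ^ 2 - u ^ 2)), zero_add, sub_add_cancel]

theorem volume_closedBall_inter_closedBall_fin_two {r a : ℝ} (hr : 0 < r) (ha : 0 ≤ a)
    (har : a ≤ r) :
    volume (closedBall !₂[-a, 0] r ∩ closedBall !₂[a, 0] r) =
      ENNReal.ofReal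
        (2 * r ^ 2 * (arccos (a / r) - sin (arccos (a / r)) * cos (arccos (a / r)))) := by
  have hlens : closedBall !₂[-a, 0] r ∩ closedBall !₂[a, 0] r =
      (fun x : EuclideanSpace ℝ (Fin 2) => (x 0, x 1)) ⁻¹'
        {p : ℝ × ℝ | p.2 ^ 2 ≤ r ^ 2 - (|p.1| + a) ^ 2} := by
    ext x
    rw [Set.mem_inter_iff, mem_closedBall_fin_two hr.le, mem_closedBall_fin_two hr.le,
      sub_neg_eq_add, sub_zero]
    exact add_sq_add_sq_le_and_sub_sq_add_sq_le_iff ha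
  have hcos : r * cos (arccos (a / r)) = a := by
    rw [cos_arccos (by linarith [div_nonneg ha hr.le]) ((div_le_one hr).2 har),
      mul_div_cancel₀ _ hr.ne']
  have hsegment := integral_sqrt_sq_sub_sq_of_cos hr.le (arccos_nonneg (a / r)) (arccos_le_pi _)
  rw [hcos] at hsegment
  rw [hlens, measurePreserving_euclideanSpace_fin_two.measure_preimage
      (measurableSet_le (by fun_prop) (by fun_prop)).nullMeasurableSet,
    volume_setOf_snd_sq_le (g := fun x => r ^ 2 - (|x| + a) ^ 2) (by fun_prop),
    ← ofReal_integral_eq_lintegral_ofReal ((integrable_sqrt_sq_sub_sq_abs_add r a).const_mul 2)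
      (ae_of_all _ fun x => by positivity),
    integral_const_mul, integral_sqrt_sq_sub_sq_abs_add ha har, hsegment]
  congr 1
  ring

theorem area_intersection_two_equal_disks (r d : ℝ) (hr : 0 < r) (hd0 : 0 ≤ d)
    (hd : d < 2 * r) (c₁ c₂ : EuclideanSpace ℝ (Fin 2)) (hdist : dist c₁ c₂ = d) :
    volume (Metric.closedBall c₁ r ∩ Metric.closedBall c₂ r) =
      ENNReal.ofReal (r ^ 2 * (2 * arccos (d / (2 * r)) - Real.sin (2 * arccos (d / (2 * r))))) := by
  have hsym : dist c₁ c₂ = dist !₂[-(d / 2), 0] !₂[d / 2, 0] := by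
    rw [hdist, EuclideanSpace.dist_eq, Fin.sum_univ_two]
    simp only [Matrix.cons_val_zero, Matrix.cons_val_one, Matrix.cons_val_fin_one,
      dist_self, Real.dist_eq, sq_abs]
    rw [show (-(d / 2) - d / 2) ^ 2 + 0 ^ 2 = d ^ 2 by ring, Real.sqrt_sq hd0]
  rw [volume_closedBall_inter_closedBall_congr hsym,
    volume_closedBall_inter_closedBall_fin_two hr (by positivity) (by linarith), div_div,
    sin_two_mul]
  congr 1
  ring
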